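/- arXiv:1811.02994 — 7 statements merged into one kernel-verified Lean document; each statement's English description precedes it below -/
import Mathlib

section
/- There exist nonnegative rationals fʳᵢⱼ, fʷᵢⱼ (i, j ∈ {0,1}) with fᵢⱼ = fʳᵢⱼ + fʷᵢⱼ, f₁₁ + f₀₁ > 0, f₁₀ + f₀₀ > 0, and not all fʷᵢⱼ equal to 0, such that the training-data score δ = f₁₁/(f₁₁+f₀₁) − f₁₀/(f₁₀+f₀₀) equals 0 while the prediction score δ̂ = (fʳ₁₁ + fʷ₀₁)/(f₁₁+f₀₁) − (fʳ₁₀ + fʷ₀₀)/(f₁₀+f₀₀) equals 1/2. (A witness: f₁₁ = f₀₁ = f₁₀ = f₀₀ = 1, with the single high-outcome tuple of the P=0 group predicted wrongly, fʷ₁₀ = 1, and all other predictions correct.) Hence a model trained on discrimination-free data can be discriminatory. -/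
/-- A model trained on discrimination-free data (δ = 0) can be
discriminatory (δ̂ = 1/2): there is an imperfect split of counts witnessing
this. -/
theorem fair_data_discriminatory_model :
    ∃ fr11 fw11 fr01 fw01 fr10 fw10 fr00 fw00 f11 f01 f10 f00 : ℚ,
      0 ≤ fr11 ∧ 0 ≤ fw11 ∧ 0 ≤ fr01 ∧ 0 ≤ fw01 ∧
      0 ≤ fr10 ∧ 0 ≤ fw10 ∧ 0 ≤ fr00 ∧ 0 ≤ fw00 ∧
      f11 = fr11 + fw11 ∧ f01 = fr01 + fw01 ∧
      f10 = fr10 + fw10 ∧ f00 = fr00 + fw00 ∧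
      0 < f11 + f01 ∧ 0 < f10 + f00 ∧
      ¬(fw11 = 0 ∧ fw01 = 0 ∧ fw10 = 0 ∧ fw00 = 0) ∧
      f11 / (f11 + f01) - f10 / (f10 + f00) = 0 ∧
      (fr11 + fw01) / (f11 + f01) - (fr10 + fw00) / (f10 + f00) = 1 / 2 := by
  -- one tuple per division; only the high-outcome tuple of the group P = 0 is mispredicted
  refine ⟨1, 0, 1, 0, 0, 1, 1, 0, 1, 1, 1, 1, ?_⟩
  norm_num
end

section
/- There exist nonnegative rationals fʳᵢⱼ, fʷᵢⱼ (i, j ∈ {0,1}) with fᵢⱼ = fʳᵢⱼ + fʷᵢⱼ, f₁₁ + f₀₁ > 0, f₁₀ + f₀₀ > 0, and not all fʷᵢⱼ equal to 0, such that the training-data score δ = f₁₁/(f₁₁+f₀₁) − f₁₀/(f₁₀+f₀₀) is nonzero while the prediction score δ̂ = (fʳ₁₁ + fʷ₀₁)/(f₁₁+f₀₁) − (fʳ₁₀ + fʷ₀₀)/(f₁₀+f₀₀) equals 0. (A witness: f₁₁ = 1, f₀₁ = 5, f₁₀ = 6, f₀₀ = 2, so δ = 1/6 − 3/4 ≠ 0,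 with fʳ₁₁ = 1, fʷ₀₁ = 2, fʳ₀₁ = 3, fʳ₁₀ = 4, fʷ₁₀ = 2, fʳ₀₀ = 2, giving δ̂ = 3/6 − 4/8 = 0.) Hence an imperfect model trained on discriminatory data can be discrimination-free, and the discrimination of an imperfect model is independent of the discrimination of the training data. -/
/-- An imperfect model trained on discriminatory data (δ ≠ 0)
can be discrimination-free (δ̂ = 0). -/
theorem discriminatory_data_fair_model :
    ∃ fr11 fw11 fr01 fw01 fr10 fw10 fr00 fw00 f11 f01 f10 f00 : ℚ,
      0 ≤ fr11 ∧ 0 ≤ fw11 ∧ 0 ≤ fr01 ∧ 0 ≤ fw01 ∧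
      0 ≤ fr10 ∧ 0 ≤ fw10 ∧ 0 ≤ fr00 ∧ 0 ≤ fw00 ∧
      f11 = fr11 + fw11 ∧ f01 = fr01 + fw01 ∧
      f10 = fr10 + fw10 ∧ f00 = fr00 + fw00 ∧
      0 < f11 + f01 ∧ 0 < f10 + f00 ∧
      ¬(fw11 = 0 ∧ fw01 = 0 ∧ fw10 = 0 ∧ fw00 = 0) ∧
      f11 / (f11 + f01) - f10 / (f10 + f00) ≠ 0 ∧
      (fr11 + fw01) / (f11 + f01) - (fr10 + fw00) / (f10 + f00) = 0 := by
  -- δ = 1/6 - 6/8 ≠ 0, while the model predicts positive for 3 of 6 and 4 of 8: δ̂ = 3/6 - 4/8 = 0.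
  refine ⟨1, 0, 3, 2, 4, 2, 2, 0, 1, 5, 6, 2, ?_⟩
  norm_num
end

section
/- For every rational α with 0 < α < 1/3, there exist count quadruples e' = (f'₁₁, f'₀₁, f'₁₀, f'₀₀) and e'' = (f''₁₁, f''₀₁, f''₁₀, f''₀₀) of nonnegative rationals, each with both denominators f₁₁+f₀₁ and f₁₀+f₀₀ positive, such that |δ(e')| ≤ α and |δ(e'')| ≤ α but the componentwise sum e = e' + e'' satisfies |δ(e)| > α. Hence non-discrimination (below threshold α) of two subsets does not imply non-discrimination of their union. -/
/-- The discrimination score of a count quadruple (f₁₁, f₀₁, f₁₀, f₀₀),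
defined to be 0 when a contrast denominator is 0. -/
def delta (f11 f01 f10 f00 : ℚ) : ℚ :=
  if f11 + f01 = 0 ∨ f10 + f00 = 0 then 0
  else f11 / (f11 + f01) - f10 / (f10 + f00)

lemma delta_of_ne_zero {f11 f01 f10 f00 : ℚ} (h1 : f11 + f01 ≠ 0) (h0 : f10 + f00 ≠ 0) :
    delta f11 f01 f10 f00 = f11 / (f11 + f01) - f10 / (f10 + f00) :=
  if_neg (not_or.2 ⟨h1, h0⟩)

lemma delta_all_positive {a b : ℚ} (ha : a ≠ 0) (hb : b ≠ 0) : delta a 0 b 0 = 0 := by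
  rw [delta_of_ne_zero (by simpa using ha) (by simpa using hb)]
  simp [ha, hb]

lemma delta_all_negative (a b : ℚ) : delta 0 a 0 b = 0 := by
  unfold delta
  split_ifs <;> simp

/-- For every threshold 0 < α < 1/3 there are two count
quadruples, each with positive contrast denominators and score at most α in
absolute value, whose componentwise sum has score exceeding α. -/
theorem fair_subsets_discriminatory_union (α : ℚ) (hα0 : 0 < α) (hα1 : α < 1 / 3) :
    ∃ f'11 f'01 f'10 f'00 f''11 f''01 f''10 f''00 : ℚ,
      0 ≤ f'11 ∧ 0 ≤ f'01 ∧ 0 ≤ f'10 ∧ 0 ≤ f'00 ∧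
      0 ≤ f''11 ∧ 0 ≤ f''01 ∧ 0 ≤ f''10 ∧ 0 ≤ f''00 ∧
      0 < f'11 + f'01 ∧ 0 < f'10 + f'00 ∧
      0 < f''11 + f''01 ∧ 0 < f''10 + f''00 ∧
      |delta f'11 f'01 f'10 f'00| ≤ α ∧
      |delta f''11 f''01 f''10 f''00| ≤ α ∧
      |delta (f'11 + f''11) (f'01 + f''01) (f'10 + f''10) (f'00 + f''00)| > α := by
  -- In each part the outcome ignores P, so both scores are 0; in the union the two groups have
  -- very different sizes, giving positive rates 1/2 and 1/12 (Simpson's paradox).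
  have h' : delta 1 0 1 0 = 0 := delta_all_positive one_ne_zero one_ne_zero
  have h'' : delta 0 1 0 11 = 0 := delta_all_negative 1 11
  have hunion : delta 1 1 1 11 = 5 / 12 := by rw [delta_of_ne_zero] <;> norm_num
  refine ⟨1, 0, 1, 0, 0, 1, 0, 11, ?_⟩
  norm_num [h', h'', hunion, hα0.le]
  linarith
end

section
/- Let α', m, K be rationals with K > 0, 0 < α' ≤ 1, m > 0 and α'·m ≤ 1. Define e' = (2α'mK, 2K − 2α'mK, α'mK, K − α'mK) and e'' = (α'K, K − α'K, α'K, 2K − α'K). Then all eight components are nonnegative, δ(e') = 0, δ(e'') = α'/2, and the componentwise sum e = e' + e'' has δ(e) = m·α'/3. In particular, for any threshold α with α'/2 ≤ α, if m > 3α/α' then |δ(e')| ≤ α and |δ(e'')| ≤ α while δ(e) > α. -/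
/-- The explicit Simpson-paradox construction: with
e' = (2α'mK, 2K−2α'mK, α'mK, K−α'mK) and e'' = (α'K, K−α'K, α'K, 2K−α'K),
all components are nonnegative, δ(e') = 0, δ(e'') = α'/2, and the
componentwise sum e has δ(e) = mα'/3; so for any threshold α ≥ α'/2, if
m > 3α/α' then both subsets are within the threshold while the union
exceeds it. -/
theorem simpson_construction (α' m K : ℚ)
    (hK : 0 < K) (hα'0 : 0 < α') (hα'1 : α' ≤ 1) (hm : 0 < m) (hαm : α' * m ≤ 1) :
    0 ≤ 2 * α' * m * K ∧ 0 ≤ 2 * K - 2 * α' * m * K ∧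
    0 ≤ α' * m * K ∧ 0 ≤ K - α' * m * K ∧
    0 ≤ α' * K ∧ 0 ≤ K - α' * K ∧ 0 ≤ α' * K ∧ 0 ≤ 2 * K - α' * K ∧
    delta (2 * α' * m * K) (2 * K - 2 * α' * m * K) (α' * m * K) (K - α' * m * K) = 0 ∧
    delta (α' * K) (K - α' * K) (α' * K) (2 * K - α' * K) = α' / 2 ∧
    delta (2 * α' * m * K + α' * K) (2 * K - 2 * α' * m * K + (K - α' * K))
        (α' * m * K + α' * K) (K - α' * m * K + (2 * K - α' * K)) = m * α' / 3 ∧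
    (∀ α : ℚ, α' / 2 ≤ α → m > 3 * α / α' →
      |delta (2 * α' * m * K) (2 * K - 2 * α' * m * K) (α' * m * K) (K - α' * m * K)| ≤ α ∧
      |delta (α' * K) (K - α' * K) (α' * K) (2 * K - α' * K)| ≤ α ∧
      delta (2 * α' * m * K + α' * K) (2 * K - 2 * α' * m * K + (K - α' * K))
          (α' * m * K + α' * K) (K - α' * m * K + (2 * K - α' * K)) > α) := by
  have hαm0 : 0 < α' * m := mul_pos hα'0 hm
  have hαmK : 0 ≤ α' * m * K := le_of_lt (mul_pos hαm0 hK)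
  have hαK : 0 ≤ α' * K := le_of_lt (mul_pos hα'0 hK)
  have hαmK1 : α' * m * K ≤ K := by nlinarith
  have hαK1 : α' * K ≤ K := by nlinarith
  have h2K : (2:ℚ) * α' * m * K + (2 * K - 2 * α' * m * K) = 2 * K := by ring
  have hKne : K ≠ 0 := ne_of_gt hK
  have hd1 : delta (2 * α' * m * K) (2 * K - 2 * α' * m * K) (α' * m * K) (K - α' * m * K) = 0 := by
    unfold delta
    rw [if_neg]
    · rw [show (2:ℚ) * α' * m * K + (2 * K - 2 * α' * m * K) = 2 * K by ring,
        show α' * m * K + (K - α' * m * K) = K by ring]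
      field_simp
      ring
    · push_neg
      constructor <;> intro h <;> [nlinarith; nlinarith]
  have hd2 : delta (α' * K) (K - α' * K) (α' * K) (2 * K - α' * K) = α' / 2 := by
    unfold delta
    rw [if_neg]
    · rw [show α' * K + (K - α' * K) = K by ring,
        show α' * K + (2 * K - α' * K) = 2 * K by ring]
      field_simp
      ring
    · push_neg
      constructor <;> intro h <;> nlinarith
  have hd3 : delta (2 * α' * m * K + α' * K) (2 * K - 2 * α' * m * K + (K - α' * K))
      (α' * m * K + α' * K) (K - α' * m * K + (2 * K - α' * K)) = m * α' / 3 := by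
    unfold delta
    rw [if_neg]
    · rw [show 2 * α' * m * K + α' * K + (2 * K - 2 * α' * m * K + (K - α' * K)) = 3 * K by ring,
        show α' * m * K + α' * K + (K - α' * m * K + (2 * K - α' * K)) = 3 * K by ring]
      field_simp
      ring
    · push_neg
      constructor <;> intro h <;> nlinarith
  refine ⟨by nlinarith, by nlinarith, hαmK, by linarith, hαK, by linarith, hαK, by nlinarith,
    hd1, hd2, hd3, ?_⟩
  intro α hα1 hα2
  have hαpos : 0 < α := lt_of_lt_of_le (by positivity) hα1
  have hmα : 3 * α < m * α' := by
    have := (div_lt_iff₀ hα'0).mp hα2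
    linarith
  refine ⟨by rw [hd1]; simpa using le_of_lt hαpos, by rw [hd2, abs_of_nonneg (by positivity)]; exact hα1, ?_⟩
  rw [hd3]
  linarith
end

section
/- Let Ω be a nonempty finite type of individuals, ε a type of explanatory signatures, E : Ω → ε the explanatory attributes, P : Ω → Bool the protected attribute, and suppose the predicted outcome D̂ : Ω → Bool factors through the explanatory attributes, i.e. D̂ = g ∘ E for some g : ε → Bool. For each signature v occurring in Ω, let the E-group score be δ applied to the counts f̂ᵢⱼ(v) = |{t ∈ Ω : E t = v, D̂ t = i, P t = j}|, and let the dataset score be the sum over occurring signatures v of (|{t : E t = v}| / |Ω|) times the E-group score. Then the dataset score of the predictions is 0; that is, a classification model that uses only explanatory variables as input is non-discriminatory. In particular, a decision tree whose every internal node splits on an explanatory attribute produces discrimination-free predictions. -/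
/-- The number of individuals with explanatory signature `v`, predicted
outcome `i` and protected value `j` (as a rational). -/
def cnt {Ω ε : Type} [Fintype Ω] [DecidableEq ε]
    (E : Ω → ε) (Dhat : Ω → Bool) (P : Ω → Bool) (v : ε) (i j : Bool) : ℚ :=
  ((Finset.univ.filter (fun t => E t = v ∧ Dhat t = i ∧ P t = j)).card : ℚ)

/-- The number of individuals with explanatory signature `v` (as a rational). -/
def groupSize {Ω ε : Type} [Fintype Ω] [DecidableEq ε] (E : Ω → ε) (v : ε) : ℚ :=
  ((Finset.univ.filter (fun t => E t = v)).card : ℚ)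

/-! Within an E-group the prediction `g v` is constant, so one outcome never occurs there:
either both acceptance rates are `0` or both are `1`, and every group score vanishes. -/

lemma delta_zero_of_no_positive_outcome (f01 f00 : ℚ) : delta 0 f01 0 f00 = 0 := by
  unfold delta
  split_ifs <;> simp

lemma delta_zero_of_no_negative_outcome (f11 f10 : ℚ) : delta f11 0 f10 0 = 0 := by
  unfold delta
  split_ifs with h
  · rfl
  · simp only [add_zero, not_or] at h ⊢
    rw [div_self h.1, div_self h.2, sub_self]

lemma cnt_eq_zero_of_forall_ne {Ω ε : Type} [Fintype Ω] [DecidableEq ε]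
    {E : Ω → ε} {Dhat : Ω → Bool} (P : Ω → Bool) {v : ε} {i : Bool}
    (h : ∀ t, E t = v → Dhat t ≠ i) (j : Bool) : cnt E Dhat P v i j = 0 := by
  rw [cnt, Nat.cast_eq_zero, Finset.card_eq_zero, Finset.filter_eq_empty_iff]
  rintro t - ⟨hE, hD, -⟩
  exact h t hE hD

theorem explanatory_model_discrimination_free_general
    {Ω ε : Type} [Fintype Ω] [DecidableEq ε]
    (E : Ω → ε) (P : Ω → Bool) (Dhat : Ω → Bool) (g : ε → Bool)
    (hfactor : Dhat = g ∘ E) :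
    ∑ v ∈ Finset.univ.image E,
        (groupSize E v / (Fintype.card Ω : ℚ)) *
          delta (cnt E Dhat P v true true) (cnt E Dhat P v false true)
            (cnt E Dhat P v true false) (cnt E Dhat P v false false) = 0 := by
  subst hfactor
  refine Finset.sum_eq_zero fun v _ => mul_eq_zero_of_right _ ?_
  have hvanish : ∀ i, g v ≠ i → ∀ j, cnt E (g ∘ E) P v i j = 0 := fun i hi =>
    cnt_eq_zero_of_forall_ne P fun t ht => by simpa [ht] using hi
  cases hg : g v
  · rw [hvanish true (by simp [hg]) true, hvanish true (by simp [hg]) false]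
    exact delta_zero_of_no_positive_outcome _ _
  · rw [hvanish false (by simp [hg]) true, hvanish false (by simp [hg]) false]
    exact delta_zero_of_no_negative_outcome _ _

/-- If the predicted outcome factors through the explanatory
attributes (D̂ = g ∘ E), then the size-weighted average over the occurring
explanatory signatures of the E-group discrimination scores of the predictions
is 0: a model using only explanatory variables is non-discriminatory. -/
theorem explanatory_model_discrimination_free
    {Ω ε : Type} [Fintype Ω] [Nonempty Ω] [DecidableEq ε]
    (E : Ω → ε) (P : Ω → Bool) (Dhat : Ω → Bool) (g : ε → Bool)
    (hfactor : Dhat = g ∘ E) :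
    ∑ v ∈ Finset.univ.image E,
        (groupSize E v / (Fintype.card Ω : ℚ)) *
          delta (cnt E Dhat P v true true) (cnt E Dhat P v false true)
            (cnt E Dhat P v true false) (cnt E Dhat P v false false) = 0 :=
  explanatory_model_discrimination_free_general E P Dhat g hfactor
end

section
/- There exist two count quadruples f = (f₁₁, f₀₁, f₁₀, f₀₀) and f' = (f'₁₁, f'₀₁, f'₁₀, f'₀₀) with all eight entries positive rationals such that both odds ratios exceed 1 and the first group is strictly less correlated than the second, i.e. 1 < (f₁₁·f₀₀)/(f₁₀·f₀₁) < (f'₁₁·f'₀₀)/(f'₁₀·f'₀₁), yet the first group has strictly larger absolute discrimination, |δ(f)| > |δ(f')|. Hence less correlation between the outcome and the protected attribute does not imply less discrimination. -/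
/- Discrimination compares outcome rates, the odds ratio compares odds, and when the outcome is rare
in both groups the rates stay small however far apart the odds are. Counts (1, 1, 1, 3) have odds
ratio 3 and δ = 1/2 − 1/4 = 1/4, while (1, 9, 1, 99) has odds ratio 11 but only δ = 1/10 − 1/100. -/
/-- Less correlation does not mean less discrimination: there
are two count quadruples with positive entries such that both odds ratios
exceed 1, the first group is strictly less correlated (odds ratio closer
to 1), yet the first group has strictly larger absolute discrimination. -/
theorem less_correlation_not_less_discrimination :
    ∃ f11 f01 f10 f00 f'11 f'01 f'10 f'00 : ℚ,
      0 < f11 ∧ 0 < f01 ∧ 0 < f10 ∧ 0 < f00 ∧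
      0 < f'11 ∧ 0 < f'01 ∧ 0 < f'10 ∧ 0 < f'00 ∧
      1 < f11 * f00 / (f10 * f01) ∧
      f11 * f00 / (f10 * f01) < f'11 * f'00 / (f'10 * f'01) ∧
      |f11 / (f11 + f01) - f10 / (f10 + f00)| >
        |f'11 / (f'11 + f'01) - f'10 / (f'10 + f'00)| := by
  refine ⟨1, 1, 1, 3, 1, 9, 1, 99, ?_⟩
  norm_num
end

section
/- There exists a finite data set Ω of four individuals with attributes D, G, M : Ω → Bool given by the rows (D, G, M) = (1, F, 1), (0, F, 0), (1, M-gender, 0), (0, M-gender, 0) (G the protected attribute with value F encoded as 1), such that the discrimination score of Ω with respect to G (computed from the counts fᵢⱼ of tuples with D = i and G-protected value j) is 0, while the prediction rule D̂ = M, which does not use the protected attribute, yields a predicted data set whose discrimination score with respect to G is 1/2. Hence a classification model built from a fair (discrimination-free) data set can be discriminatory. -/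
/-- The count (as a rational) of individuals in `Fin 4` with outcome value `i`
and protected value `j`. -/
def cnt4 (D P : Fin 4 → Bool) (i j : Bool) : ℚ :=
  ((Finset.univ.filter (fun t => D t = i ∧ P t = j)).card : ℚ)

/-- The discrimination score of a four-individual data set with outcome `D`
and protected attribute `P` (no explanatory attributes). -/
def score4 (D P : Fin 4 → Bool) : ℚ :=
  cnt4 D P true true / (cnt4 D P true true + cnt4 D P false true) -
    cnt4 D P true false / (cnt4 D P true false + cnt4 D P false false)

/-!
Each of the four cells (D, G) ∈ {0,1}² holds exactly one individual, so both groups have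
acceptance rate 1/2 and the data are fair. The attribute M, however, is 1 only for the
accepted woman: under D̂ = M women keep acceptance rate 1/2 while men drop to 0.
-/

def outcome : Fin 4 → Bool := ![true, false, true, false]

def female : Fin 4 → Bool := ![true, true, false, false]

def prediction : Fin 4 → Bool := ![true, false, false, false]

theorem cnt4_outcome_female (i j : Bool) : cnt4 outcome female i j = 1 := by
  rw [cnt4, Nat.cast_eq_one]
  revert i j
  decide

theorem cnt4_prediction_female :
    cnt4 prediction female true true = 1 ∧ cnt4 prediction female false true = 1 ∧
      cnt4 prediction female true false = 0 ∧ cnt4 prediction female false false = 2 := by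
  simp only [cnt4]
  norm_cast

theorem score4_outcome_female : score4 outcome female = 0 := by
  simp [score4, cnt4_outcome_female]

theorem score4_prediction_female : score4 prediction female = 1 / 2 := by
  obtain ⟨h₁, h₂, h₃, h₄⟩ := cnt4_prediction_female
  rw [score4, h₁, h₂, h₃, h₄]
  norm_num

/-- There is a four-row data set (D, G, M) =
(1,F,1), (0,F,0), (1,M,0), (0,M,0) (female G encoded as `true`) that is
discrimination-free with respect to G, yet the prediction rule D̂ = M
(which does not use the protected attribute) has discrimination score 1/2
with respect to G.  A model built from fair data can be discriminatory. -/
theorem fair_data_model_discriminates :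
    ∃ D G M : Fin 4 → Bool,
      D 0 = true ∧ G 0 = true ∧ M 0 = true ∧
      D 1 = false ∧ G 1 = true ∧ M 1 = false ∧
      D 2 = true ∧ G 2 = false ∧ M 2 = false ∧
      D 3 = false ∧ G 3 = false ∧ M 3 = false ∧
      score4 D G = 0 ∧ score4 M G = 1 / 2 :=
  ⟨outcome, female, prediction, rfl, rfl, rfl, rfl, rfl, rfl, rfl, rfl, rfl, rfl, rfl, rfl,
    score4_outcome_female, score4_prediction_female⟩
end
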